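/- arXiv:2204.02541 — 2 statements merged into one kernel-verified Lean document; each statement's English description precedes it below -/
import Mathlib

section
/- Let V be a finite type, r : V → V → Prop a transition relation, and I ⊆ V a set of goal vertices. Assume the graph has no cycle avoiding I: there do not exist k ≥ 1 and p : Fin (k+1) → V with p 0 = p k, r (p i) (p (i+1)) for all i < k, and p i ∉ I for all i. Then every infinite execution σ : ℕ → V with r (σ n) (σ (n+1)) for all n visits I infinitely often: for every N there exists m ≥ N with σ m ∈ I. -/
/-- On a finite graph with no cycle avoiding the goal set `I`, every infinite
execution visits `I` infinitely often. -/
theorem no_livelock_implies_recurrence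
    {V : Type*} [Fintype V] (r : V → V → Prop) (I : Set V)
    (hnocycle : ¬ ∃ (k : ℕ) (_ : 1 ≤ k) (p : Fin (k + 1) → V),
      p 0 = p ⟨k, Nat.lt_succ_self k⟩ ∧
      (∀ i : Fin k, r (p i.castSucc) (p i.succ)) ∧
      (∀ i : Fin (k + 1), p i ∉ I))
    (σ : ℕ → V) (hσ : ∀ n, r (σ n) (σ (n + 1))) :
    ∀ N, ∃ m, N ≤ m ∧ σ m ∈ I := by
  intro N
  by_contra h
  push_neg at h
  -- pigeonhole on σ (N + ·)
  have hcard : Fintype.card V < Fintype.card (Fin (Fintype.card V + 1)) := by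
    simp
  obtain ⟨i, j, hij, heq⟩ :=
    Fintype.exists_ne_map_eq_of_card_lt (fun t : Fin (Fintype.card V + 1) => σ (N + t)) hcard
  -- WLOG i < j
  wlog hlt : (i : ℕ) < (j : ℕ) generalizing i j
  · have hne : (i : ℕ) ≠ (j : ℕ) := Fin.val_ne_of_ne hij
    exact this j i hij.symm heq.symm (by omega)
  set k : ℕ := (j : ℕ) - (i : ℕ) with hk
  have hk1 : 1 ≤ k := by omega
  apply hnocycle
  refine ⟨k, hk1, fun t => σ (N + i + t), ?_, ?_, ?_⟩
  · simp only [Fin.val_zero, Nat.add_zero]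
    have : N + (i : ℕ) + k = N + (j : ℕ) := by omega
    rw [this]
    exact heq
  · intro t
    have h1 : ((t.castSucc : Fin (k+1)) : ℕ) = (t : ℕ) := rfl
    have h2 : ((t.succ : Fin (k+1)) : ℕ) = (t : ℕ) + 1 := rfl
    simp only [h1, h2, ← Nat.add_assoc]
    exact hσ _
  · intro t
    exact h _ (by omega)
end

section
/- Let V be a type, r : V → V → Prop a transition relation, and I ⊆ V a nonempty set of goal vertices. Assume: (i) every vertex has an r-successor (∀ v, ∃ u, r v u), and (ii) from every vertex some goal vertex is reachable (∀ v, ∃ n and p : Fin (n+1) → V with p 0 = v, p n ∈ I, and r (p i) (p (i+1)) for all i < n). Then for every initial vertex v0 there exists an infinite execution σ : ℕ → V with σ 0 = v0, r (σ n) (σ (n+1)) for all n, and σ visits I infinitely often: for every N there exists m ≥ N with σ m ∈ I. -/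
/-- If every vertex has a successor and the goal set `I` is reachable from
every vertex, then from every initial vertex there exists an infinite execution
visiting `I` infinitely often. -/
theorem exists_execution_recurrence
    {V : Type*} (r : V → V → Prop) (I : Set V) (hI : I.Nonempty)
    (hsucc : ∀ v, ∃ u, r v u)
    (hreach : ∀ v, ∃ (n : ℕ) (p : Fin (n + 1) → V),
      p 0 = v ∧ p ⟨n, Nat.lt_succ_self n⟩ ∈ I ∧
      ∀ i : Fin n, r (p i.castSucc) (p i.succ)) :
    ∀ v0, ∃ σ : ℕ → V, σ 0 = v0 ∧ (∀ n, r (σ n) (σ (n + 1))) ∧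
      ∀ N, ∃ m, N ≤ m ∧ σ m ∈ I := by
  classical
  intro v0
  have hex : ∀ v, ∃ n : ℕ, ∃ p : Fin (n + 1) → V,
      p 0 = v ∧ p ⟨n, Nat.lt_succ_self n⟩ ∈ I ∧
      ∀ i : Fin n, r (p i.castSucc) (p i.succ) := hreach
  set dist : V → ℕ := fun v => Nat.find (hex v) with hdist
  have key : ∀ v, v ∉ I → ∃ u, r v u ∧ dist u < dist v := by
    intro v hv
    have hne : dist v ≠ 0 := by
      intro h0
      apply hv
      obtain ⟨p, hp0, hpI, hpr⟩ := Nat.find_spec (hex v)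
      have : (⟨dist v, Nat.lt_succ_self _⟩ : Fin (dist v + 1)) = 0 := by
        apply Fin.ext; simp [h0]
      rw [this, hp0] at hpI
      exact hpI
    obtain ⟨m, hm⟩ : ∃ m, dist v = m + 1 := ⟨dist v - 1, by omega⟩
    have hspec := Nat.find_spec (hex v)
    rw [show Nat.find (hex v) = m + 1 from hm] at hspec
    obtain ⟨p, hp0, hpI, hpr⟩ := hspec
    refine ⟨p ⟨1, by omega⟩, ?_, ?_⟩
    · have h0 := hpr ⟨0, by omega⟩
      have e1 : (⟨0, by omega⟩ : Fin (m + 1)).castSucc = 0 := by apply Fin.ext; simp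
      have e2 : (⟨0, by omega⟩ : Fin (m + 1)).succ = ⟨1, by omega⟩ := by
        apply Fin.ext; simp
      rw [e1, e2, hp0] at h0
      exact h0
    · have hle : dist (p ⟨1, by omega⟩) ≤ m := by
        apply Nat.find_le
        refine ⟨fun i => p ⟨i.1 + 1, by omega⟩, rfl, ?_, ?_⟩
        · exact hpI
        · intro i
          have h := hpr ⟨i.1 + 1, by omega⟩
          have e1 : (⟨i.1 + 1, by omega⟩ : Fin (m + 1)).castSucc =
              (⟨i.castSucc.1 + 1, by omega⟩ : Fin (m + 1 + 1)) := by
            apply Fin.ext; simp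
          have e2 : (⟨i.1 + 1, by omega⟩ : Fin (m + 1)).succ =
              (⟨i.succ.1 + 1, by omega⟩ : Fin (m + 1 + 1)) := by
            apply Fin.ext; simp
          rw [e1, e2] at h
          exact h
      omega
  have hstep : ∀ v, ∃ u, r v u ∧ (v ∉ I → dist u < dist v) := by
    intro v
    by_cases hv : v ∈ I
    · obtain ⟨u, hu⟩ := hsucc v
      exact ⟨u, hu, fun h => absurd hv h⟩
    · obtain ⟨u, hu, hlt⟩ := key v hv
      exact ⟨u, hu, fun _ => hlt⟩
  choose f hf1 hf2 using hstep
  have main : ∀ k, ∀ v, dist v ≤ k → ∃ m, f^[m] v ∈ I := by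
    intro k
    induction k with
    | zero =>
      intro v hv
      by_cases hvI : v ∈ I
      · exact ⟨0, hvI⟩
      · have := hf2 v hvI; omega
    | succ k ih =>
      intro v hv
      by_cases hvI : v ∈ I
      · exact ⟨0, hvI⟩
      · obtain ⟨m, hm⟩ := ih (f v) (by have := hf2 v hvI; omega)
        exact ⟨m + 1, by rwa [Function.iterate_succ_apply]⟩
  refine ⟨fun n => f^[n] v0, rfl, ?_, ?_⟩
  · intro n
    simp only [Function.iterate_succ_apply']
    exact hf1 _
  · intro N
    obtain ⟨m, hm⟩ := main (dist (f^[N] v0)) (f^[N] v0) le_rfl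
    refine ⟨N + m, Nat.le_add_right _ _, ?_⟩
    show f^[N + m] v0 ∈ I
    rw [Nat.add_comm, Function.iterate_add_apply]
    exact hm
end
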